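/- arXiv:1309.6385 — 2 statements merged into one kernel-verified Lean document; each statement's English description precedes it below -/
import Mathlib

section
/- Let (A,H,◁,▷) be a matched pair of Hopf algebras where A and H are *-Hopf algebras. Then there exists a *-Hopf algebra structure on the bicrossproduct A⋈H restricting to the given involutions on A and H (necessarily given by (ax)* = ∑(x₁*▷a₁*)(x₂*◁a₂*)) if and only if for all x ∈ H and a ∈ A: a*ε_H(x*) = ∑(x₂◁a₂)*▷(x₁▷a₁)* and ε_A(a*)x* = ∑(x₂◁a₂)*◁(x₁▷a₁)*. -/
open scoped TensorProduct
open Coalgebra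

noncomputable section

/-- A Sweedler representation of the comultiplication of `x`:
`Δ x = ∑ᵢ x1 i ⊗ x2 i`. -/
def Rep2 {H : Type} [AddCommGroup H] [Module ℂ H] [Coalgebra ℂ H]
    {ι : Type} (x : H) (s : Finset ι) (x1 x2 : ι → H) : Prop :=
  Coalgebra.comul (R := ℂ) x = ∑ i ∈ s, x1 i ⊗ₜ[ℂ] x2 i

/-- A representation of an element of a tensor product as a finite sum of pure tensors. -/
def TRep {M N : Type} [AddCommGroup M] [Module ℂ M] [AddCommGroup N] [Module ℂ N]
    {ι : Type} (w : M ⊗[ℂ] N) (s : Finset ι) (p : ι → M) (q : ι → N) : Prop :=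
  w = ∑ i ∈ s, p i ⊗ₜ[ℂ] q i

/-- The iterated comultiplication `x ↦ ∑ (x₁ ⊗ x₂) ⊗ x₃`. -/
def comul3 (H : Type) [AddCommGroup H] [Module ℂ H] [Coalgebra ℂ H] :
    H →ₗ[ℂ] (H ⊗[ℂ] H) ⊗[ℂ] H :=
  (LinearMap.rTensor H (Coalgebra.comul (R := ℂ))) ∘ₗ Coalgebra.comul (R := ℂ)

/-- The iterated comultiplication with four output legs. -/
def comul4 (H : Type) [AddCommGroup H] [Module ℂ H] [Coalgebra ℂ H] :
    H →ₗ[ℂ] ((H ⊗[ℂ] H) ⊗[ℂ] H) ⊗[ℂ] H :=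
  (LinearMap.rTensor H (comul3 H)) ∘ₗ Coalgebra.comul (R := ℂ)

/-- The iterated comultiplication with five output legs. -/
def comul5 (H : Type) [AddCommGroup H] [Module ℂ H] [Coalgebra ℂ H] :
    H →ₗ[ℂ] (((H ⊗[ℂ] H) ⊗[ℂ] H) ⊗[ℂ] H) ⊗[ℂ] H :=
  (LinearMap.rTensor H (comul4 H)) ∘ₗ Coalgebra.comul (R := ℂ)

/-- The iterated comultiplication with six output legs. -/
def comul6 (H : Type) [AddCommGroup H] [Module ℂ H] [Coalgebra ℂ H] :
    H →ₗ[ℂ] ((((H ⊗[ℂ] H) ⊗[ℂ] H) ⊗[ℂ] H) ⊗[ℂ] H) ⊗[ℂ] H :=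
  (LinearMap.rTensor H (comul5 H)) ∘ₗ Coalgebra.comul (R := ℂ)

/-- A `*`-structure on a Hopf algebra over `ℂ`: a conjugate-linear involution which is
antimultiplicative and comultiplicative.  Together with the Hopf algebra this is the data of
a `*`-Hopf algebra. -/
structure StarHopf (H : Type) [Ring H] [HopfAlgebra ℂ H] : Type where
  st : H → H
  st_add : ∀ x y : H, st (x + y) = st x + st y
  st_smul : ∀ (c : ℂ) (x : H), st (c • x) = (starRingEnd ℂ) c • st x
  st_invol : ∀ x : H, st (st x) = x
  st_antimul : ∀ x y : H, st (x * y) = st y * st x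
  st_comul : ∀ (x : H) {ι : Type} (s : Finset ι) (x1 x2 : ι → H),
      Rep2 x s x1 x2 →
      Coalgebra.comul (R := ℂ) (st x) = ∑ i ∈ s, st (x1 i) ⊗ₜ[ℂ] st (x2 i)

/-- A right comodule over a Hopf algebra. -/
structure RightComodule (H : Type) [Ring H] [HopfAlgebra ℂ H]
    (V : Type) [AddCommGroup V] [Module ℂ V] : Type where
  ρ : V →ₗ[ℂ] V ⊗[ℂ] H
  counit_cond : ∀ v : V, (TensorProduct.rid ℂ V)
      ((LinearMap.lTensor V (Coalgebra.counit (R := ℂ))) (ρ v)) = v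
  coassoc_cond : ∀ v : V, (LinearMap.rTensor H ρ) (ρ v)
      = (TensorProduct.assoc ℂ V H H).symm
          ((LinearMap.lTensor V (Coalgebra.comul (R := ℂ))) (ρ v))

/-- An inner product: sesquilinear (linear in the first variable), conjugate-symmetric and
positive definite. -/
structure IsInner {V : Type} [AddCommGroup V] [Module ℂ V] (ip : V → V → ℂ) : Prop where
  add_left : ∀ u u' v : V, ip (u + u') v = ip u v + ip u' v
  smul_left : ∀ (c : ℂ) (u v : V), ip (c • u) v = c * ip u v
  conj_symm : ∀ u v : V, ip v u = (starRingEnd ℂ) (ip u v)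
  pos_def : ∀ v : V, v ≠ 0 → 0 < (ip v v).re

/-- The invariance condition `∑ ⟨u₀,v⟩ S(u₁) = ∑ ⟨u,v₀⟩ v₁*` for a sesquilinear form on a
right comodule. -/
def RInvariant {H : Type} [Ring H] [HopfAlgebra ℂ H] (σ : StarHopf H)
    {V : Type} [AddCommGroup V] [Module ℂ V] (c : RightComodule H V)
    (ip : V → V → ℂ) : Prop :=
  ∀ (u v : V) {ι κ : Type} (s : Finset ι) (t : Finset κ)
    (u0 : ι → V) (u1 : ι → H) (v0 : κ → V) (v1 : κ → H),
    TRep (c.ρ u) s u0 u1 → TRep (c.ρ v) t v0 v1 →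
    ∑ i ∈ s, ip (u0 i) v • (HopfAlgebra.antipode (R := ℂ) (u1 i))
      = ∑ j ∈ t, ip u (v0 j) • σ.st (v1 j)

/-- A compact quantum group: a `*`-Hopf algebra such that every right comodule admits an
invariant inner product. -/
def IsCQG (H : Type) [Ring H] [HopfAlgebra ℂ H] (σ : StarHopf H) : Prop :=
  ∀ (V : Type) [AddCommGroup V] [Module ℂ V] (c : RightComodule H V),
    ∃ ip : V → V → ℂ, IsInner ip ∧ RInvariant σ c ip

/-- `φ` is a normal integral on the Hopf algebra `H` (a two-sided integral with `φ(1) = 1`);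
a Hopf algebra is cosemisimple iff it admits a normal integral. -/
def IsNormalIntegral (H : Type) [Ring H] [HopfAlgebra ℂ H] (φ : H →ₗ[ℂ] ℂ) : Prop :=
  φ 1 = 1 ∧
  (∀ (x : H) {ι : Type} (s : Finset ι) (x1 x2 : ι → H), Rep2 x s x1 x2 →
      ∑ i ∈ s, φ (x1 i) • x2 i = φ x • (1 : H)) ∧
  (∀ (x : H) {ι : Type} (s : Finset ι) (x1 x2 : ι → H), Rep2 x s x1 x2 →
      ∑ i ∈ s, φ (x2 i) • x1 i = φ x • (1 : H))

/-- A matched pair of Hopf algebras `(A, H, ◁, ▷)`: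
`tri x a = x ▷ a` and `trl x a = x ◁ a`. -/
structure IsMatchedPair (A H : Type) [Ring A] [HopfAlgebra ℂ A] [Ring H] [HopfAlgebra ℂ H]
    (tri : H →ₗ[ℂ] A →ₗ[ℂ] A) (trl : H →ₗ[ℂ] A →ₗ[ℂ] H) : Prop where
  -- `(A, ▷)` is a left `H`-module coalgebra
  tri_one_act : ∀ a : A, tri 1 a = a
  tri_mul_act : ∀ (x y : H) (a : A), tri (x * y) a = tri x (tri y a)
  tri_counit : ∀ (x : H) (a : A),
      Coalgebra.counit (R := ℂ) (tri x a)
        = Coalgebra.counit (R := ℂ) x * Coalgebra.counit (R := ℂ) a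
  tri_comul : ∀ (x : H) (a : A) {ι κ : Type} (s : Finset ι) (t : Finset κ)
      (x1 x2 : ι → H) (a1 a2 : κ → A), Rep2 x s x1 x2 → Rep2 a t a1 a2 →
      Coalgebra.comul (R := ℂ) (tri x a)
        = ∑ i ∈ s, ∑ j ∈ t, tri (x1 i) (a1 j) ⊗ₜ[ℂ] tri (x2 i) (a2 j)
  -- `(H, ◁)` is a right `A`-module coalgebra
  trl_one_act : ∀ x : H, trl x 1 = x
  trl_mul_act : ∀ (x : H) (a b : A), trl x (a * b) = trl (trl x a) b
  trl_counit : ∀ (x : H) (a : A),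
      Coalgebra.counit (R := ℂ) (trl x a)
        = Coalgebra.counit (R := ℂ) x * Coalgebra.counit (R := ℂ) a
  trl_comul : ∀ (x : H) (a : A) {ι κ : Type} (s : Finset ι) (t : Finset κ)
      (x1 x2 : ι → H) (a1 a2 : κ → A), Rep2 x s x1 x2 → Rep2 a t a1 a2 →
      Coalgebra.comul (R := ℂ) (trl x a)
        = ∑ i ∈ s, ∑ j ∈ t, trl (x1 i) (a1 j) ⊗ₜ[ℂ] trl (x2 i) (a2 j)
  -- the compatibility relations
  compat_mul : ∀ (x : H) (a b : A) {ι κ : Type} (s : Finset ι) (t : Finset κ)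
      (x1 x2 : ι → H) (a1 a2 : κ → A), Rep2 x s x1 x2 → Rep2 a t a1 a2 →
      tri x (a * b) = ∑ i ∈ s, ∑ j ∈ t, tri (x1 i) (a1 j) * tri (trl (x2 i) (a2 j)) b
  compat_one : ∀ x : H, tri x 1 = Coalgebra.counit (R := ℂ) x • (1 : A)
  compat_mul' : ∀ (x y : H) (a : A) {ι κ : Type} (s : Finset ι) (t : Finset κ)
      (y1 y2 : ι → H) (a1 a2 : κ → A), Rep2 y s y1 y2 → Rep2 a t a1 a2 →
      trl (x * y) a = ∑ i ∈ s, ∑ j ∈ t, trl x (tri (y1 i) (a1 j)) * trl (y2 i) (a2 j)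
  compat_one' : ∀ a : A, trl 1 a = Coalgebra.counit (R := ℂ) a • (1 : H)
  compat_sym : ∀ (x : H) (a : A) {ι κ : Type} (s : Finset ι) (t : Finset κ)
      (x1 x2 : ι → H) (a1 a2 : κ → A), Rep2 x s x1 x2 → Rep2 a t a1 a2 →
      ∑ i ∈ s, ∑ j ∈ t, trl (x1 i) (a1 j) ⊗ₜ[ℂ] tri (x2 i) (a2 j)
        = ∑ i ∈ s, ∑ j ∈ t, trl (x2 i) (a2 j) ⊗ₜ[ℂ] tri (x1 i) (a1 j)

/-- `M`, identified with `A ⊗ H` via `e`, carries the bicrossproduct Hopf algebra structure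
`A ⋈ H` of the matched pair `(A, H, ◁, ▷)`. -/
structure IsBicross (A H : Type) [Ring A] [HopfAlgebra ℂ A] [Ring H] [HopfAlgebra ℂ H]
    (tri : H →ₗ[ℂ] A →ₗ[ℂ] A) (trl : H →ₗ[ℂ] A →ₗ[ℂ] H)
    (M : Type) [Ring M] [HopfAlgebra ℂ M] (e : A ⊗[ℂ] H ≃ₗ[ℂ] M) : Prop where
  mul_def : ∀ (a b : A) (x y : H) {ι κ : Type} (s : Finset ι) (t : Finset κ)
      (x1 x2 : ι → H) (b1 b2 : κ → A), Rep2 x s x1 x2 → Rep2 b t b1 b2 →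
      e (a ⊗ₜ[ℂ] x) * e (b ⊗ₜ[ℂ] y)
        = ∑ i ∈ s, ∑ j ∈ t, e ((a * tri (x1 i) (b1 j)) ⊗ₜ[ℂ] (trl (x2 i) (b2 j) * y))
  one_def : (1 : M) = e ((1 : A) ⊗ₜ[ℂ] (1 : H))
  comul_def : ∀ (a : A) (x : H) {ι κ : Type} (s : Finset ι) (t : Finset κ)
      (a1 a2 : ι → A) (x1 x2 : κ → H), Rep2 a s a1 a2 → Rep2 x t x1 x2 →
      Coalgebra.comul (R := ℂ) (e (a ⊗ₜ[ℂ] x))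
        = ∑ i ∈ s, ∑ j ∈ t, e (a1 i ⊗ₜ[ℂ] x1 j) ⊗ₜ[ℂ] e (a2 i ⊗ₜ[ℂ] x2 j)
  counit_def : ∀ (a : A) (x : H),
      Coalgebra.counit (R := ℂ) (e (a ⊗ₜ[ℂ] x))
        = Coalgebra.counit (R := ℂ) a * Coalgebra.counit (R := ℂ) x

/-- The compatibility conditions (eq:compat-cerito-acciones):
`a* ε_H(x*) = ∑ (x₂ ◁ a₂)* ▷ (x₁ ▷ a₁)*` and `ε_A(a*) x* = ∑ (x₂ ◁ a₂)* ◁ (x₁ ▷ a₁)*`. -/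
def MPStarCompat {A H : Type} [Ring A] [HopfAlgebra ℂ A] [Ring H] [HopfAlgebra ℂ H]
    (tri : H →ₗ[ℂ] A →ₗ[ℂ] A) (trl : H →ₗ[ℂ] A →ₗ[ℂ] H)
    (σA : StarHopf A) (σH : StarHopf H) : Prop :=
  (∀ (x : H) (a : A) {ι κ : Type} (s : Finset ι) (t : Finset κ)
      (x1 x2 : ι → H) (a1 a2 : κ → A), Rep2 x s x1 x2 → Rep2 a t a1 a2 →
      Coalgebra.counit (R := ℂ) (σH.st x) • σA.st a
        = ∑ i ∈ s, ∑ j ∈ t,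
            tri (σH.st (trl (x2 i) (a2 j))) (σA.st (tri (x1 i) (a1 j)))) ∧
  (∀ (x : H) (a : A) {ι κ : Type} (s : Finset ι) (t : Finset κ)
      (x1 x2 : ι → H) (a1 a2 : κ → A), Rep2 x s x1 x2 → Rep2 a t a1 a2 →
      Coalgebra.counit (R := ℂ) (σA.st a) • σH.st x
        = ∑ i ∈ s, ∑ j ∈ t,
            trl (σH.st (trl (x2 i) (a2 j))) (σA.st (tri (x1 i) (a1 j))))

/-! The involution is forced to be `(a x)* = x* a*`, i.e. `e (a ⊗ x) ↦ e (1 ⊗ x*) e (a* ⊗ 1)`; it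
is conjugate-linear and comultiplicative by construction, and both involutivity and
antimultiplicativity reduce to the single identity `(x a)* = a* x*`, that is
`∑ (x₂ ◁ a₂)* (x₁ ▷ a₁)* = a* x*` in `A ⋈ H`.

Since `x a = ∑ (x₁ ▷ a₁)(x₂ ◁ a₂)`, multiplication `H ⊗ A → A ⋈ H` is `(▷ ⊗ ◁) ∘ Δ`. Put
`g (x ⊗ a) = ∑ (x₂* ◁ a₂*)* ⊗ (x₁* ▷ a₁*)*` on the coalgebra `H ⊗ A`; the compatibility
conditions say precisely that `▷ ∘ g` and `◁ ∘ g` are the counit projections. By the symmetry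
axiom of the matched pair, `g = (L ⊗ T) ∘ Δ` with `L (y ⊗ b) = (y* ◁ b*)*` and
`T (y ⊗ b) = (y* ▷ b*)*`, two comultiplicative maps that cocommute, so `g` is comultiplicative.
Hence `(▷ ⊗ ◁) ∘ Δ ∘ g` is the flip `x ⊗ a ↦ a ⊗ x`, which is the identity above. Conversely,
a `*`-structure restricting to `A` and `H` satisfies that identity, and applying `ε_H` to the
`H`-leg, resp. `ε_A` to the `A`-leg, gives back the two conditions. -/

open TensorProduct LinearMap

section CoalgebraMaps

variable {R C X Y : Type*} [CommRing R] [AddCommGroup C] [Module R C] [Coalgebra R C]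
  [AddCommGroup X] [Module R X] [Coalgebra R X] [AddCommGroup Y] [Module R Y] [Coalgebra R Y]

local notation "δ" => comul (R := R)
local infix:90 " ⊗ₘ " => TensorProduct.map

theorem comul_comp_map_comp_comul_of_comm (f : C →ₗ[R] X) (g : C →ₗ[R] Y)
    (hf : δ ∘ₗ f = (f ⊗ₘ f) ∘ₗ δ) (hg : δ ∘ₗ g = (g ⊗ₘ g) ∘ₗ δ)
    (hfg : (f ⊗ₘ g) ∘ₗ (TensorProduct.comm R C C).toLinearMap ∘ₗ δ = (f ⊗ₘ g) ∘ₗ δ) :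
    δ ∘ₗ (f ⊗ₘ g) ∘ₗ δ = ((f ⊗ₘ g) ∘ₗ δ) ⊗ₘ ((f ⊗ₘ g) ∘ₗ δ) ∘ₗ δ := by
  have hgf : (g ⊗ₘ f) ∘ₗ (TensorProduct.comm R C C).toLinearMap ∘ₗ δ = (g ⊗ₘ f) ∘ₗ δ := by
    ext c
    simpa [TensorProduct.map_comm] using
      (congrArg (TensorProduct.comm R X Y) (LinearMap.congr_fun hfg c)).symm
  -- after coassociativity, the two sides differ only in the order of the two middle legs,
  -- on which `g ⊗ f` is applied
  have middle (φ : C →ₗ[R] C ⊗[R] C) :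
      ((f ⊗ₘ g) ⊗ₘ (f ⊗ₘ g)) ∘ₗ (TensorProduct.assoc R _ _ _).toLinearMap ∘ₗ
          (((TensorProduct.assoc R _ _ _).symm.toLinearMap ∘ₗ (id ⊗ₘ φ) ∘ₗ δ) ⊗ₘ id) ∘ₗ δ =
        ((f ⊗ₘ id) ⊗ₘ (id ⊗ₘ g)) ∘ₗ (TensorProduct.assoc R _ _ _).toLinearMap ∘ₗ
          (((TensorProduct.assoc R _ _ _).symm.toLinearMap ∘ₗ (id ⊗ₘ ((g ⊗ₘ f) ∘ₗ φ)) ∘ₗ δ) ⊗ₘ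
            id) ∘ₗ δ := by
    simp only [coassoc_simps]
  calc δ ∘ₗ (f ⊗ₘ g) ∘ₗ δ
      = ((f ⊗ₘ g) ⊗ₘ (f ⊗ₘ g)) ∘ₗ (TensorProduct.assoc R _ _ _).toLinearMap ∘ₗ
          (((TensorProduct.assoc R _ _ _).symm.toLinearMap ∘ₗ
            (id ⊗ₘ ((TensorProduct.comm R C C).toLinearMap ∘ₗ δ)) ∘ₗ δ) ⊗ₘ id) ∘ₗ δ := by
        rw [TensorProduct.comul_def]
        simp only [coassoc_simps, hf, hg]
    _ = ((f ⊗ₘ g) ⊗ₘ (f ⊗ₘ g)) ∘ₗ (TensorProduct.assoc R _ _ _).toLinearMap ∘ₗ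
          (((TensorProduct.assoc R _ _ _).symm.toLinearMap ∘ₗ (id ⊗ₘ δ) ∘ₗ δ) ⊗ₘ id) ∘ₗ δ := by
        rw [middle, middle, hgf]
    _ = ((f ⊗ₘ g) ∘ₗ δ) ⊗ₘ ((f ⊗ₘ g) ∘ₗ δ) ∘ₗ δ := by simp only [coassoc_simps]

theorem map_counit_comp_comul_eq_comm :
    map ((TensorProduct.lid R Y).toLinearMap ∘ₗ rTensor Y (counit : X →ₗ[R] R))
      ((TensorProduct.rid R X).toLinearMap ∘ₗ lTensor X (counit : Y →ₗ[R] R)) ∘ₗ comul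
    = (TensorProduct.comm R X Y).toLinearMap := by
  have h : map ((TensorProduct.lid R Y).toLinearMap ∘ₗ rTensor Y (counit : X →ₗ[R] R))
      ((TensorProduct.rid R X).toLinearMap ∘ₗ lTensor X (counit : Y →ₗ[R] R)) ∘ₗ
        (tensorTensorTensorComm R X X Y Y).toLinearMap =
      (TensorProduct.comm R X Y).toLinearMap ∘ₗ
        map ((TensorProduct.lid R X).toLinearMap ∘ₗ rTensor X counit)
          ((TensorProduct.rid R Y).toLinearMap ∘ₗ lTensor Y counit) := by
    apply TensorProduct.ext_fourfold'
    intro x x' y y'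
    simp [TensorProduct.smul_tmul']
  refine TensorProduct.ext' fun x y => ?_
  simpa [TensorProduct.comul_tmul, AlgebraTensorModule.tensorTensorTensorComm_eq] using
    congr($h (comul x ⊗ₜ comul y))

end CoalgebraMaps

theorem LinearEquiv.ext_tmul {P Q M N : Type} [AddCommGroup P] [Module ℂ P]
    [AddCommGroup Q] [Module ℂ Q] [AddCommGroup M] [Module ℂ M] [AddCommGroup N] [Module ℂ N]
    {τ : ℂ →+* ℂ} (e : P ⊗[ℂ] Q ≃ₗ[ℂ] M) {f g : M →ₛₗ[τ] N}
    (h : ∀ p q, f (e (p ⊗ₜ q)) = g (e (p ⊗ₜ q))) : f = g := by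
  have : f ∘ₛₗ e.toLinearMap = g ∘ₛₗ e.toLinearMap := TensorProduct.ext' h
  ext m
  simpa using congr($this (e.symm m))

section Sweedler

variable {X Y Z : Type} [AddCommGroup X] [Module ℂ X] [Coalgebra ℂ X]
  [AddCommGroup Y] [Module ℂ Y] [Coalgebra ℂ Y] [AddCommGroup Z] [Module ℂ Z] [Coalgebra ℂ Z]
  {ι κ : Type}

theorem Rep2.exists_prod (x : X) : ∃ s : Finset (X × X), Rep2 x s Prod.fst Prod.snd :=
  TensorProduct.exists_finset _

theorem Rep2.sum_counit_smul_left {x : X} {s : Finset ι} {x1 x2 : ι → X}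
    (h : Rep2 x s x1 x2) : ∑ i ∈ s, counit (R := ℂ) (x1 i) • x2 i = x := by
  have := congrArg ((TensorProduct.lid ℂ X).toLinearMap ∘ₗ rTensor X counit) h
  simp_all [map_sum]

theorem Rep2.sum_counit_smul_right {x : X} {s : Finset ι} {x1 x2 : ι → X}
    (h : Rep2 x s x1 x2) : ∑ i ∈ s, counit (R := ℂ) (x2 i) • x1 i = x := by
  have := congrArg ((TensorProduct.rid ℂ X).toLinearMap ∘ₗ lTensor X counit) h
  simp_all [map_sum]

theorem Rep2.one {B : Type} [Ring B] [Bialgebra ℂ B] :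
    Rep2 (1 : B) ({()} : Finset Unit) (fun _ => 1) (fun _ => 1) := by
  simp [Rep2, Algebra.TensorProduct.one_def]

theorem Rep2.comul_tmul {x : X} {y : Y} {s : Finset ι} {t : Finset κ} {x1 x2 : ι → X}
    {y1 y2 : κ → Y} (hx : Rep2 x s x1 x2) (hy : Rep2 y t y1 y2) :
    comul (R := ℂ) (x ⊗ₜ[ℂ] y)
      = ∑ i ∈ s, ∑ j ∈ t, (x1 i ⊗ₜ[ℂ] y1 j) ⊗ₜ[ℂ] (x2 i ⊗ₜ[ℂ] y2 j) := by
  rw [TensorProduct.comul_tmul, hx, hy]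
  simp [TensorProduct.sum_tmul, TensorProduct.tmul_sum]
  exact Finset.sum_comm

def IsComulBilin (φ : X →ₗ[ℂ] Y →ₗ[ℂ] Z) : Prop :=
  ∀ (x : X) (y : Y) {ι κ : Type} (s : Finset ι) (t : Finset κ) (x1 x2 : ι → X) (y1 y2 : κ → Y),
    Rep2 x s x1 x2 → Rep2 y t y1 y2 →
      comul (R := ℂ) (φ x y) = ∑ i ∈ s, ∑ j ∈ t, φ (x1 i) (y1 j) ⊗ₜ[ℂ] φ (x2 i) (y2 j)

theorem IsComulBilin.comul_comp_lift {φ : X →ₗ[ℂ] Y →ₗ[ℂ] Z} (hφ : IsComulBilin φ) :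
    comul ∘ₗ lift φ = map (lift φ) (lift φ) ∘ₗ comul := by
  refine TensorProduct.ext' fun x y => ?_
  obtain ⟨s, hx⟩ := Rep2.exists_prod x
  obtain ⟨t, hy⟩ := Rep2.exists_prod y
  simp [hφ x y s t _ _ _ _ hx hy, Rep2.comul_tmul hx hy, map_sum]

end Sweedler

namespace StarHopf

section

variable {H : Type} [Ring H] [HopfAlgebra ℂ H] (σ : StarHopf H)

def starₗ : H →ₗ⋆[ℂ] H where
  toFun := σ.st
  map_add' := σ.st_add
  map_smul' := σ.st_smul

@[simp] theorem starₗ_apply (x : H) : σ.starₗ x = σ.st x := rfl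

theorem st_one : σ.st 1 = 1 := by
  simpa [σ.st_invol] using (σ.st_antimul (σ.st 1) 1).symm

theorem st_sum {ι : Type} (s : Finset ι) (f : ι → H) :
    σ.st (∑ i ∈ s, f i) = ∑ i ∈ s, σ.st (f i) :=
  map_sum σ.starₗ f s

theorem rep2 {ι : Type} {x : H} {s : Finset ι} {x1 x2 : ι → H} (h : Rep2 x s x1 x2) :
    Rep2 (σ.st x) s (fun i => σ.st (x1 i)) (fun i => σ.st (x2 i)) :=
  σ.st_comul x s x1 x2 h

end

section

variable {X H A : Type} [Ring X] [HopfAlgebra ℂ X] [Ring H] [HopfAlgebra ℂ H]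
  [Ring A] [HopfAlgebra ℂ A] (σX : StarHopf X) (σH : StarHopf H) (σA : StarHopf A)

def conjBilin (φ : H →ₗ[ℂ] A →ₗ[ℂ] X) : H →ₗ[ℂ] A →ₗ[ℂ] X :=
  mk₂ ℂ (fun y b => σX.st (φ (σH.st y) (σA.st b)))
    (fun y y' b => by simp [σH.st_add, σX.st_add])
    (fun c y b => by simp [σH.st_smul, σX.st_smul])
    (fun y b b' => by simp [σA.st_add, σX.st_add])
    (fun c y b => by simp [σA.st_smul, σX.st_smul])

@[simp] theorem conjBilin_apply (φ : H →ₗ[ℂ] A →ₗ[ℂ] X) (y : H) (b : A) :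
    conjBilin σX σH σA φ y b = σX.st (φ (σH.st y) (σA.st b)) := rfl

theorem _root_.IsComulBilin.conjBilin {φ : H →ₗ[ℂ] A →ₗ[ℂ] X} (hφ : IsComulBilin φ) :
    IsComulBilin (conjBilin σX σH σA φ) := by
  intro y b ι κ s t y1 y2 b1 b2 hy hb
  have h := hφ _ _ s t _ _ _ _ (σH.rep2 hy) (σA.rep2 hb)
  rw [← Finset.sum_product'] at h
  simpa [← Finset.sum_product'] using σX.st_comul _ _ _ _ h

end

end StarHopf

section Bicrossproduct

variable {A H M : Type} [Ring A] [HopfAlgebra ℂ A] [Ring H] [HopfAlgebra ℂ H]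
  [Ring M] [HopfAlgebra ℂ M] {tri : H →ₗ[ℂ] A →ₗ[ℂ] A} {trl : H →ₗ[ℂ] A →ₗ[ℂ] H}
  (σA : StarHopf A) (σH : StarHopf H) {e : A ⊗[ℂ] H ≃ₗ[ℂ] M}

variable (tri trl) in
/-- The map `g` above: `x ⊗ a ↦ ∑ (x₂* ◁ a₂*)* ⊗ (x₁* ▷ a₁*)*`. -/
def starFlip : H ⊗[ℂ] A →ₗ[ℂ] H ⊗[ℂ] A :=
  map (lift (σH.conjBilin σH σA trl)) (lift (σA.conjBilin σH σA tri)) ∘ₗ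
    (TensorProduct.comm ℂ (H ⊗[ℂ] A) (H ⊗[ℂ] A)).toLinearMap ∘ₗ comul

theorem starFlip_star_tmul {ι κ : Type} {x : H} {a : A} {s : Finset ι} {t : Finset κ}
    {x1 x2 : ι → H} {a1 a2 : κ → A} (hx : Rep2 x s x1 x2) (ha : Rep2 a t a1 a2) :
    starFlip tri trl σA σH (σH.st x ⊗ₜ σA.st a)
      = ∑ i ∈ s, ∑ j ∈ t, σH.st (trl (x2 i) (a2 j)) ⊗ₜ σA.st (tri (x1 i) (a1 j)) := by
  simp [starFlip, Rep2.comul_tmul (σH.rep2 hx) (σA.rep2 ha), map_sum, σH.st_invol, σA.st_invol]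

theorem MPStarCompat.lift_tri_comp_starFlip (hc : MPStarCompat tri trl σA σH) :
    lift tri ∘ₗ starFlip tri trl σA σH
      = (TensorProduct.lid ℂ A).toLinearMap ∘ₗ rTensor A counit := by
  refine TensorProduct.ext' fun x a => ?_
  obtain ⟨s, hx⟩ := Rep2.exists_prod x
  obtain ⟨t, ha⟩ := Rep2.exists_prod a
  have h := hc.1 _ _ s t _ _ _ _ (σH.rep2 hx) (σA.rep2 ha)
  simp only [σH.st_invol, σA.st_invol] at h
  simp [starFlip, Rep2.comul_tmul hx ha, map_sum, h]

theorem MPStarCompat.lift_trl_comp_starFlip (hc : MPStarCompat tri trl σA σH) :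
    lift trl ∘ₗ starFlip tri trl σA σH
      = (TensorProduct.rid ℂ H).toLinearMap ∘ₗ lTensor H counit := by
  refine TensorProduct.ext' fun x a => ?_
  obtain ⟨s, hx⟩ := Rep2.exists_prod x
  obtain ⟨t, ha⟩ := Rep2.exists_prod a
  have h := hc.2 _ _ s t _ _ _ _ (σH.rep2 hx) (σA.rep2 ha)
  simp only [σH.st_invol, σA.st_invol] at h
  simp [starFlip, Rep2.comul_tmul hx ha, map_sum, h]

namespace IsMatchedPair

variable (hmp : IsMatchedPair A H tri trl)
include hmp

theorem starFlip_eq :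
    starFlip tri trl σA σH
      = map (lift (σH.conjBilin σH σA trl)) (lift (σA.conjBilin σH σA tri)) ∘ₗ comul := by
  refine TensorProduct.ext' fun x a => ?_
  obtain ⟨s, hx⟩ := Rep2.exists_prod x
  obtain ⟨t, ha⟩ := Rep2.exists_prod a
  have h := congrArg (map σH.starₗ σA.starₗ)
    (hmp.compat_sym _ _ s t _ _ _ _ (σH.rep2 hx) (σA.rep2 ha))
  simp [starFlip, Rep2.comul_tmul hx ha, map_sum] at h ⊢
  exact h.symm

theorem comul_comp_starFlip :
    comul ∘ₗ starFlip tri trl σA σH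
      = map (starFlip tri trl σA σH) (starFlip tri trl σA σH) ∘ₗ comul := by
  rw [hmp.starFlip_eq]
  exact comul_comp_map_comp_comul_of_comm _ _
    (IsComulBilin.conjBilin σH σH σA hmp.trl_comul).comul_comp_lift
    (IsComulBilin.conjBilin σA σH σA hmp.tri_comul).comul_comp_lift (hmp.starFlip_eq σA σH)

theorem map_lift_comp_comul_comp_starFlip (hc : MPStarCompat tri trl σA σH) :
    map (lift tri) (lift trl) ∘ₗ comul ∘ₗ starFlip tri trl σA σH
      = (TensorProduct.comm ℂ H A).toLinearMap := by
  rw [hmp.comul_comp_starFlip, ← LinearMap.comp_assoc, ← map_comp,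
    hc.lift_tri_comp_starFlip, hc.lift_trl_comp_starFlip, map_counit_comp_comul_eq_comm]

end IsMatchedPair

variable (e) in
def crossMul : H ⊗[ℂ] A →ₗ[ℂ] M :=
  mul' ℂ M ∘ₗ map (e.toLinearMap ∘ₗ TensorProduct.mk ℂ A H 1)
    (e.toLinearMap ∘ₗ (TensorProduct.mk ℂ A H).flip 1)

@[simp] theorem crossMul_tmul (x : H) (a : A) :
    crossMul e (x ⊗ₜ a) = e (1 ⊗ₜ x) * e (a ⊗ₜ 1) := rfl

namespace IsBicross

variable (hM : IsBicross A H tri trl M e)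
include hM

theorem crossMul_tmul_eq_sum {ι κ : Type} {x : H} {a : A} {s : Finset ι} {t : Finset κ}
    {x1 x2 : ι → H} {a1 a2 : κ → A} (hx : Rep2 x s x1 x2) (ha : Rep2 a t a1 a2) :
    crossMul e (x ⊗ₜ a) = ∑ i ∈ s, ∑ j ∈ t, e (tri (x1 i) (a1 j) ⊗ₜ trl (x2 i) (a2 j)) := by
  simp [hM.mul_def 1 a x 1 s t _ _ _ _ hx ha]

theorem crossMul_eq : crossMul e = e.toLinearMap ∘ₗ map (lift tri) (lift trl) ∘ₗ comul := by
  refine TensorProduct.ext' fun x a => ?_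
  obtain ⟨s, hx⟩ := Rep2.exists_prod x
  obtain ⟨t, ha⟩ := Rep2.exists_prod a
  simp [hM.crossMul_tmul_eq_sum hx ha, Rep2.comul_tmul hx ha, map_sum]

theorem comul_comp_crossMul :
    comul ∘ₗ crossMul e = map (crossMul e) (crossMul e) ∘ₗ comul := by
  refine TensorProduct.ext' fun x a => ?_
  obtain ⟨s, hx⟩ := Rep2.exists_prod x
  obtain ⟨t, ha⟩ := Rep2.exists_prod a
  simp [Bialgebra.comul_mul, hM.comul_def 1 x _ s _ _ _ _ Rep2.one hx,
    hM.comul_def a 1 t _ _ _ _ _ ha Rep2.one, Rep2.comul_tmul hx ha, map_sum, Finset.sum_mul_sum]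

variable (hmp : IsMatchedPair A H tri trl)
include hmp

theorem eA_mul_eA (a b : A) : e (a ⊗ₜ 1) * e (b ⊗ₜ 1) = e ((a * b) ⊗ₜ 1) := by
  obtain ⟨t, hb⟩ := Rep2.exists_prod b
  conv_rhs => rw [← hb.sum_counit_smul_right]
  simp [hM.mul_def a b 1 1 _ t _ _ _ _ Rep2.one hb, hmp.tri_one_act, hmp.compat_one',
    Finset.mul_sum, map_sum, TensorProduct.smul_tmul, TensorProduct.sum_tmul]

theorem eH_mul_eH (x y : H) : e (1 ⊗ₜ x) * e (1 ⊗ₜ y) = e (1 ⊗ₜ (x * y)) := by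
  obtain ⟨s, hx⟩ := Rep2.exists_prod x
  conv_rhs => rw [← hx.sum_counit_smul_left]
  simp [hM.mul_def 1 1 x y s _ _ _ _ _ hx Rep2.one, hmp.trl_one_act, hmp.compat_one,
    Finset.sum_mul, map_sum, TensorProduct.smul_tmul, TensorProduct.tmul_sum]

theorem eA_mul_eH (a : A) (y : H) : e (a ⊗ₜ 1) * e (1 ⊗ₜ y) = e (a ⊗ₜ y) := by
  simp [hM.mul_def a 1 1 y _ _ _ _ _ _ Rep2.one Rep2.one, hmp.tri_one_act, hmp.trl_one_act]

end IsBicross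

variable (e) in
def bicrossStar : M →ₗ⋆[ℂ] M :=
  crossMul e ∘ₛₗ map σH.starₗ σA.starₗ ∘ₛₗ (TensorProduct.comm ℂ A H).toLinearMap ∘ₛₗ
    e.symm.toLinearMap

@[simp] theorem bicrossStar_apply (a : A) (x : H) :
    bicrossStar σA σH e (e (a ⊗ₜ x)) = e (1 ⊗ₜ σH.st x) * e (σA.st a ⊗ₜ 1) := by
  simp [bicrossStar]

namespace IsBicross

variable (hM : IsBicross A H tri trl M e)
include hM

theorem bicrossStar_eA (a : A) : bicrossStar σA σH e (e (a ⊗ₜ 1)) = e (σA.st a ⊗ₜ 1) := by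
  rw [bicrossStar_apply, σH.st_one, ← hM.one_def, one_mul]

theorem bicrossStar_eH (x : H) : bicrossStar σA σH e (e (1 ⊗ₜ x)) = e (1 ⊗ₜ σH.st x) := by
  rw [bicrossStar_apply, σA.st_one, ← hM.one_def, mul_one]

theorem comul_bicrossStar (m : M) :
    comul (bicrossStar σA σH e m) = map (bicrossStar σA σH e) (bicrossStar σA σH e) (comul m) := by
  suffices h : comul ∘ₛₗ bicrossStar σA σH e
      = map (bicrossStar σA σH e) (bicrossStar σA σH e) ∘ₛₗ comul from congr($h m)
  refine e.ext_tmul fun a x => ?_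
  obtain ⟨s, ha⟩ := Rep2.exists_prod a
  obtain ⟨t, hx⟩ := Rep2.exists_prod x
  have h := LinearMap.congr_fun hM.comul_comp_crossMul (σH.st x ⊗ₜ σA.st a)
  simp only [LinearMap.comp_apply] at h
  simp [← crossMul_tmul, h, Rep2.comul_tmul (σH.rep2 hx) (σA.rep2 ha),
    hM.comul_def a x s t _ _ _ _ ha hx, map_sum]
  exact Finset.sum_comm

variable {σA σH} (hmp : IsMatchedPair A H tri trl)
include hmp

theorem bicrossStar_eA_mul_mul_eH (a : A) (y : H) (w : M) :
    bicrossStar σA σH e (e (a ⊗ₜ 1) * w * e (1 ⊗ₜ y))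
      = bicrossStar σA σH e (e (1 ⊗ₜ y)) * bicrossStar σA σH e w
          * bicrossStar σA σH e (e (a ⊗ₜ 1)) := by
  suffices h : bicrossStar σA σH e ∘ₛₗ (mulRight ℂ (e (1 ⊗ₜ y)) ∘ₗ mulLeft ℂ (e (a ⊗ₜ 1)))
      = (mulRight ℂ (bicrossStar σA σH e (e (a ⊗ₜ 1))) ∘ₗ
          mulLeft ℂ (bicrossStar σA σH e (e (1 ⊗ₜ y)))) ∘ₛₗ bicrossStar σA σH e from
    by simpa only [LinearMap.comp_apply, mulLeft_apply, mulRight_apply] using congr($h w)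
  refine e.ext_tmul fun b x => ?_
  have hprod : e (a ⊗ₜ 1) * e (b ⊗ₜ x) * e (1 ⊗ₜ y) = e ((a * b) ⊗ₜ (x * y)) := by
    rw [← hM.eA_mul_eH hmp b x, ← mul_assoc, hM.eA_mul_eA hmp, mul_assoc, hM.eH_mul_eH hmp,
      hM.eA_mul_eH hmp]
  simp only [LinearMap.comp_apply, mulLeft_apply, mulRight_apply, hprod, hM.bicrossStar_eA,
    hM.bicrossStar_eH]
  simp only [bicrossStar_apply, σA.st_antimul, σH.st_antimul, ← hM.eA_mul_eA hmp,
    ← hM.eH_mul_eH hmp, mul_assoc]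

variable (hc : MPStarCompat tri trl σA σH)
include hc

theorem crossMul_comp_starFlip :
    crossMul e ∘ₗ starFlip tri trl σA σH
      = e.toLinearMap ∘ₗ (TensorProduct.comm ℂ H A).toLinearMap := by
  rw [hM.crossMul_eq, LinearMap.comp_assoc, LinearMap.comp_assoc,
    hmp.map_lift_comp_comul_comp_starFlip σA σH hc]

theorem bicrossStar_crossMul (x : H) (a : A) :
    bicrossStar σA σH e (crossMul e (x ⊗ₜ a)) = e (σA.st a ⊗ₜ σH.st x) := by
  obtain ⟨s, hx⟩ := Rep2.exists_prod x
  obtain ⟨t, ha⟩ := Rep2.exists_prod a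
  calc bicrossStar σA σH e (crossMul e (x ⊗ₜ a))
      = crossMul e (starFlip tri trl σA σH (σH.st x ⊗ₜ σA.st a)) := by
        simp [hM.crossMul_tmul_eq_sum hx ha, starFlip_star_tmul σA σH hx ha, map_sum]
    _ = e (σA.st a ⊗ₜ σH.st x) := by
        simpa using congr($(hM.crossMul_comp_starFlip hmp hc) (σH.st x ⊗ₜ σA.st a))

theorem bicrossStar_mul_tmul (a b : A) (x y : H) :
    bicrossStar σA σH e (e (a ⊗ₜ x) * e (b ⊗ₜ y))
      = bicrossStar σA σH e (e (b ⊗ₜ y)) * bicrossStar σA σH e (e (a ⊗ₜ x)) := by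
  calc bicrossStar σA σH e (e (a ⊗ₜ x) * e (b ⊗ₜ y))
      = bicrossStar σA σH e (e (a ⊗ₜ 1) * crossMul e (x ⊗ₜ b) * e (1 ⊗ₜ y)) := by
        rw [crossMul_tmul, ← hM.eA_mul_eH hmp a x, ← hM.eA_mul_eH hmp b y]
        simp only [mul_assoc]
    _ = e (1 ⊗ₜ σH.st y) * e (σA.st b ⊗ₜ σH.st x) * e (σA.st a ⊗ₜ 1) := by
        rw [hM.bicrossStar_eA_mul_mul_eH hmp, hM.bicrossStar_crossMul hmp hc,
          hM.bicrossStar_eA, hM.bicrossStar_eH]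
    _ = bicrossStar σA σH e (e (b ⊗ₜ y)) * bicrossStar σA σH e (e (a ⊗ₜ x)) := by
        rw [← hM.eA_mul_eH hmp (σA.st b)]
        simp only [bicrossStar_apply, mul_assoc]

theorem bicrossStar_mul (m n : M) :
    bicrossStar σA σH e (m * n) = bicrossStar σA σH e n * bicrossStar σA σH e m := by
  have pure_left (a : A) (x : H) :
      bicrossStar σA σH e ∘ₛₗ mulLeft ℂ (e (a ⊗ₜ x))
        = mulRight ℂ (bicrossStar σA σH e (e (a ⊗ₜ x))) ∘ₛₗ bicrossStar σA σH e :=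
    e.ext_tmul fun b y => hM.bicrossStar_mul_tmul hmp hc a b x y
  have h : bicrossStar σA σH e ∘ₛₗ mulRight ℂ n
      = mulLeft ℂ (bicrossStar σA σH e n) ∘ₛₗ bicrossStar σA σH e :=
    e.ext_tmul fun a x => congr($(pure_left a x) n)
  exact congr($h m)

theorem bicrossStar_bicrossStar (m : M) : bicrossStar σA σH e (bicrossStar σA σH e m) = m := by
  suffices h : (bicrossStar σA σH e).comp (bicrossStar σA σH e) = LinearMap.id from congr($h m)
  refine e.ext_tmul fun a x => ?_
  simp [← crossMul_tmul, hM.bicrossStar_crossMul hmp hc, σA.st_invol, σH.st_invol]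

def starHopf : StarHopf M where
  st := bicrossStar σA σH e
  st_add := map_add _
  st_smul := map_smulₛₗ _
  st_invol := hM.bicrossStar_bicrossStar hmp hc
  st_antimul := hM.bicrossStar_mul hmp hc
  st_comul m _ s m1 m2 hm := by
    rw [Rep2] at hm
    simp [hM.comul_bicrossStar, hm, map_sum]

end IsBicross

variable (e) in
def projA : M →ₗ[ℂ] A :=
  (TensorProduct.rid ℂ A).toLinearMap ∘ₗ lTensor A counit ∘ₗ e.symm.toLinearMap

variable (e) in
def projH : M →ₗ[ℂ] H :=
  (TensorProduct.lid ℂ H).toLinearMap ∘ₗ rTensor H counit ∘ₗ e.symm.toLinearMap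

@[simp] theorem projA_apply (a : A) (x : H) : projA e (e (a ⊗ₜ x)) = counit (R := ℂ) x • a := by
  simp [projA]

@[simp] theorem projH_apply (a : A) (x : H) : projH e (e (a ⊗ₜ x)) = counit (R := ℂ) a • x := by
  simp [projH]

namespace IsBicross

variable {σA σH} (hM : IsBicross A H tri trl M e) (hmp : IsMatchedPair A H tri trl)
include hM hmp

theorem projA_crossMul (y : H) (b : A) : projA e (crossMul e (y ⊗ₜ b)) = tri y b := by
  obtain ⟨s, hy⟩ := Rep2.exists_prod y
  obtain ⟨t, hb⟩ := Rep2.exists_prod b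
  conv_rhs => rw [← hy.sum_counit_smul_right, ← hb.sum_counit_smul_right]
  simp [hM.crossMul_tmul_eq_sum hy hb, hmp.trl_counit, map_sum, mul_smul, Finset.smul_sum]
  rw [Finset.sum_comm]
  exact Finset.sum_congr rfl fun _ _ => Finset.sum_congr rfl fun _ _ => smul_comm _ _ _

theorem projH_crossMul (y : H) (b : A) : projH e (crossMul e (y ⊗ₜ b)) = trl y b := by
  obtain ⟨s, hy⟩ := Rep2.exists_prod y
  obtain ⟨t, hb⟩ := Rep2.exists_prod b
  conv_rhs => rw [← hy.sum_counit_smul_left, ← hb.sum_counit_smul_left]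
  simp [hM.crossMul_tmul_eq_sum hy hb, hmp.tri_counit, map_sum, mul_smul, Finset.smul_sum]
  rw [Finset.sum_comm]
  exact Finset.sum_congr rfl fun _ _ => Finset.sum_congr rfl fun _ _ => smul_comm _ _ _

variable (σM : StarHopf M) (hA : ∀ a : A, σM.st (e (a ⊗ₜ 1)) = e (σA.st a ⊗ₜ 1))
  (hH : ∀ x : H, σM.st (e (1 ⊗ₜ x)) = e (1 ⊗ₜ σH.st x))
include hA hH

theorem st_eq_crossMul (a : A) (x : H) : σM.st (e (a ⊗ₜ x)) = crossMul e (σH.st x ⊗ₜ σA.st a) := by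
  rw [← hM.eA_mul_eH hmp, σM.st_antimul, hA, hH, crossMul_tmul]

theorem mpStarCompat : MPStarCompat tri trl σA σH := by
  have hstar {ι κ : Type} {x : H} {a : A} {s : Finset ι} {t : Finset κ} {x1 x2 : ι → H}
      {a1 a2 : κ → A} (hx : Rep2 x s x1 x2) (ha : Rep2 a t a1 a2) :
      e (σA.st a ⊗ₜ σH.st x)
        = ∑ i ∈ s, ∑ j ∈ t, crossMul e (σH.st (trl (x2 i) (a2 j)) ⊗ₜ σA.st (tri (x1 i) (a1 j))) := by
    rw [← hM.eA_mul_eH hmp, ← hA, ← hH, ← σM.st_antimul, ← crossMul_tmul,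
      hM.crossMul_tmul_eq_sum hx ha]
    simp [σM.st_sum, hM.st_eq_crossMul hmp σM hA hH]
  constructor
  · intro x a ι κ s t x1 x2 a1 a2 hx ha
    simpa [map_sum, hM.projA_crossMul hmp, -crossMul_tmul] using congr(projA e $(hstar hx ha))
  · intro x a ι κ s t x1 x2 a1 a2 hx ha
    simpa [map_sum, hM.projH_crossMul hmp, -crossMul_tmul] using congr(projH e $(hstar hx ha))

end IsBicross

end Bicrossproduct

/-- Let `(A, H, ◁, ▷)` be a matched pair of Hopf algebras where `A` and `H`
are `*`-Hopf algebras.  There exists a `*`-Hopf algebra structure on the bicrossproduct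
`A ⋈ H` restricting to the given involutions on `A` and `H` if and only if
`a* ε_H(x*) = ∑ (x₂ ◁ a₂)* ▷ (x₁ ▷ a₁)*` and `ε_A(a*) x* = ∑ (x₂ ◁ a₂)* ◁ (x₁ ▷ a₁)*`
for all `x ∈ H`, `a ∈ A`. -/
theorem bicrossproduct_star_iff
    {A H : Type} [Ring A] [HopfAlgebra ℂ A] [Ring H] [HopfAlgebra ℂ H]
    (tri : H →ₗ[ℂ] A →ₗ[ℂ] A) (trl : H →ₗ[ℂ] A →ₗ[ℂ] H)
    (hmp : IsMatchedPair A H tri trl)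
    (σA : StarHopf A) (σH : StarHopf H)
    (M : Type) [Ring M] [HopfAlgebra ℂ M] (e : A ⊗[ℂ] H ≃ₗ[ℂ] M)
    (hM : IsBicross A H tri trl M e) :
    (∃ σM : StarHopf M,
        (∀ a : A, σM.st (e (a ⊗ₜ[ℂ] (1 : H))) = e (σA.st a ⊗ₜ[ℂ] (1 : H))) ∧
        (∀ x : H, σM.st (e ((1 : A) ⊗ₜ[ℂ] x)) = e ((1 : A) ⊗ₜ[ℂ] σH.st x)))
      ↔ MPStarCompat tri trl σA σH := by
  constructor
  · rintro ⟨σM, hA, hH⟩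
    exact hM.mpStarCompat hmp σM hA hH
  · intro hc
    exact ⟨hM.starHopf hmp hc, hM.bicrossStar_eA σA σH, hM.bicrossStar_eH σA σH⟩
end
end

section
/- Let (A,H,▶,ρ,χ,ψ) be a cocycle linked pair of cosemisimple bialgebras with normal integrals φ_A ∈ A^∨ and φ_H ∈ H^∨. Then the functional Φ on the cocycle bismash product A^ψ#_χH defined by Φ(a#x) = φ_A(a)φ_H(x) is a normal integral, and hence A^ψ#_χH is cosemisimple. -/
open scoped TensorProduct
open Coalgebra

noncomputable section

section CocycleLinkedPair

variable (A H : Type) [Ring A] [HopfAlgebra ℂ A] [Ring H] [HopfAlgebra ℂ H]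

/-- A cocycle linked pair of bialgebras/Hopf algebras `(A, H, ▶, ρ, χ, ψ)`, in the sense of
Andruskiewitsch–Devoto: `tri x a = x ▶ a` is a cocycle left `H`-module algebra structure on
`A` (with cocycle `chi = χ`), `rho = ρ : H → H ⊗ A` is a cocycle right `A`-comodule coalgebra
structure on `H` (with cococycle `psi = ψ`), subject to the compatibility relations
(c1)–(c8).  All Sweedler-type identities are expressed by quantifying over representations
of the relevant (iterated) comultiplications as finite sums of pure tensors. -/
structure IsCocycleLinkedPair
    (tri : H →ₗ[ℂ] A →ₗ[ℂ] A) (rho : H →ₗ[ℂ] H ⊗[ℂ] A)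
    (chi : H →ₗ[ℂ] H →ₗ[ℂ] A) (psi : H →ₗ[ℂ] A ⊗[ℂ] A) : Prop where
  -- (a1)–(a6): `(A, ▶, χ)` is a cocycle left `H`-module algebra
  a1 : ∀ x : H, tri x 1 = Coalgebra.counit (R := ℂ) x • (1 : A)
  a2 : ∀ (x : H) (a b : A) {ι : Type} (s : Finset ι) (x1 x2 : ι → H),
      Rep2 x s x1 x2 → tri x (a * b) = ∑ i ∈ s, tri (x1 i) a * tri (x2 i) b
  a3 : ∀ a : A, tri 1 a = a
  a4 : ∀ (x y : H) (a : A) {ι κ : Type} (s : Finset ι) (t : Finset κ)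
      (x1 x2 : ι → H) (y1 y2 : κ → H), Rep2 x s x1 x2 → Rep2 y t y1 y2 →
      ∑ i ∈ s, ∑ j ∈ t, tri (x1 i) (tri (y1 j) a) * chi (x2 i) (y2 j)
        = ∑ i ∈ s, ∑ j ∈ t, chi (x1 i) (y1 j) * tri (x2 i * y2 j) a
  a5 : ∀ (x y z : H) {ι κ μ : Type} (s : Finset ι) (t : Finset κ) (u : Finset μ)
      (x1 x2 : ι → H) (y1 y2 : κ → H) (z1 z2 : μ → H),
      Rep2 x s x1 x2 → Rep2 y t y1 y2 → Rep2 z u z1 z2 →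
      ∑ i ∈ s, ∑ j ∈ t, ∑ k ∈ u,
          tri (x1 i) (chi (y1 j) (z1 k)) * chi (x2 i) (y2 j * z2 k)
        = ∑ i ∈ s, ∑ j ∈ t, chi (x1 i) (y1 j) * chi (x2 i * y2 j) z
  a6 : ∀ x : H, chi x 1 = Coalgebra.counit (R := ℂ) x • (1 : A)
      ∧ chi 1 x = Coalgebra.counit (R := ℂ) x • (1 : A)
  -- (b1)–(b6): `(H, ρ, ψ)` is a cocycle right `A`-comodule coalgebra
  b1 : ∀ (x : H) {ι : Type} (s : Finset ι) (h : ι → H) (c : ι → A),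
      TRep (rho x) s h c →
      ∑ i ∈ s, Coalgebra.counit (R := ℂ) (h i) • c i
        = Coalgebra.counit (R := ℂ) x • (1 : A)
  b2 : ∀ (x : H) {ι : Type} (s : Finset ι) (g k : ι → H) (c d : ι → A),
      (TensorProduct.map rho rho) (Coalgebra.comul (R := ℂ) x)
        = ∑ i ∈ s, (g i ⊗ₜ[ℂ] c i) ⊗ₜ[ℂ] (k i ⊗ₜ[ℂ] d i) →
      (LinearMap.rTensor A (Coalgebra.comul (R := ℂ))) (rho x)
        = ∑ i ∈ s, (g i ⊗ₜ[ℂ] k i) ⊗ₜ[ℂ] (c i * d i)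
  b3 : ∀ (x : H) {ι : Type} (s : Finset ι) (h : ι → H) (c : ι → A),
      TRep (rho x) s h c → ∑ i ∈ s, Coalgebra.counit (R := ℂ) (c i) • h i = x
  b4 : ∀ (x : H) {ι κ : Type} (s : Finset ι) (t : Finset κ)
      (u v : ι → A) (h : ι → H) (a b : ι → A)
      (g : κ → H) (c d : κ → A) (p q : κ → A),
      (TensorProduct.map psi ((LinearMap.rTensor A rho) ∘ₗ rho))
          (Coalgebra.comul (R := ℂ) x)
        = ∑ i ∈ s, (u i ⊗ₜ[ℂ] v i) ⊗ₜ[ℂ] ((h i ⊗ₜ[ℂ] a i) ⊗ₜ[ℂ] b i) →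
      (TensorProduct.map
            ((LinearMap.lTensor H (Coalgebra.comul (R := ℂ) : A →ₗ[ℂ] A ⊗[ℂ] A)) ∘ₗ rho)
            psi)
          (Coalgebra.comul (R := ℂ) x)
        = ∑ j ∈ t, (g j ⊗ₜ[ℂ] (c j ⊗ₜ[ℂ] d j)) ⊗ₜ[ℂ] (p j ⊗ₜ[ℂ] q j) →
      ∑ i ∈ s, (h i ⊗ₜ[ℂ] (u i * a i)) ⊗ₜ[ℂ] (v i * b i)
        = ∑ j ∈ t, (g j ⊗ₜ[ℂ] (c j * p j)) ⊗ₜ[ℂ] (d j * q j)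
  b5 : ∀ (x : H) {ι κ : Type} (s : Finset ι) (t : Finset κ)
      (p q r : ι → A) (u v w : ι → A)
      (a : κ → A) (b c : κ → A) (d f : κ → A),
      (TensorProduct.map
            ((LinearMap.rTensor A (Coalgebra.comul (R := ℂ) : A →ₗ[ℂ] A ⊗[ℂ] A)) ∘ₗ psi)
            ((LinearMap.rTensor A psi) ∘ₗ rho))
          (Coalgebra.comul (R := ℂ) x)
        = ∑ i ∈ s, ((p i ⊗ₜ[ℂ] q i) ⊗ₜ[ℂ] r i) ⊗ₜ[ℂ] ((u i ⊗ₜ[ℂ] v i) ⊗ₜ[ℂ] w i) →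
      (TensorProduct.map
            ((LinearMap.lTensor A (Coalgebra.comul (R := ℂ) : A →ₗ[ℂ] A ⊗[ℂ] A)) ∘ₗ psi)
            psi)
          (Coalgebra.comul (R := ℂ) x)
        = ∑ j ∈ t, (a j ⊗ₜ[ℂ] (b j ⊗ₜ[ℂ] c j)) ⊗ₜ[ℂ] (d j ⊗ₜ[ℂ] f j) →
      ∑ i ∈ s, ((p i * u i) ⊗ₜ[ℂ] (q i * v i)) ⊗ₜ[ℂ] (r i * w i)
        = ∑ j ∈ t, (a j ⊗ₜ[ℂ] (b j * d j)) ⊗ₜ[ℂ] (c j * f j)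
  b6 : ∀ (x : H) {ι : Type} (s : Finset ι) (u v : ι → A),
      TRep (psi x) s u v →
      (∑ i ∈ s, Coalgebra.counit (R := ℂ) (u i) • v i
          = Coalgebra.counit (R := ℂ) x • (1 : A))
      ∧ (∑ i ∈ s, Coalgebra.counit (R := ℂ) (v i) • u i
          = Coalgebra.counit (R := ℂ) x • (1 : A))
  -- (c1)–(c8): the compatibility relations
  c1 : ∀ (x : H) (a : A), Coalgebra.counit (R := ℂ) (tri x a)
      = Coalgebra.counit (R := ℂ) x * Coalgebra.counit (R := ℂ) a
  c2 : rho 1 = (1 : H) ⊗ₜ[ℂ] (1 : A)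
  c3 : ∀ x y : H, Coalgebra.counit (R := ℂ) (chi x y)
      = Coalgebra.counit (R := ℂ) x * Coalgebra.counit (R := ℂ) y
  c4 : psi 1 = (1 : A) ⊗ₜ[ℂ] (1 : A)
  c5 : ∀ (x : H) (a : A) {ι κ : Type} (s : Finset ι) (t : Finset κ)
      (p q u v : ι → A)
      (pp qq : κ → A) (hh : κ → H) (rr : κ → A) (kk : κ → H) (aa bb : κ → A),
      (TensorProduct.map
            ((Coalgebra.comul (R := ℂ) : A →ₗ[ℂ] A ⊗[ℂ] A) ∘ₗ (TensorProduct.lift tri))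
            psi)
          ((LinearMap.rTensor H ((TensorProduct.mk ℂ H A).flip a))
            (Coalgebra.comul (R := ℂ) x))
        = ∑ i ∈ s, (p i ⊗ₜ[ℂ] q i) ⊗ₜ[ℂ] (u i ⊗ₜ[ℂ] v i) →
      (TensorProduct.map
            (TensorProduct.map (TensorProduct.map psi rho) (LinearMap.id : H →ₗ[ℂ] H))
            (LinearMap.id : A ⊗[ℂ] A →ₗ[ℂ] A ⊗[ℂ] A))
          ((comul3 H x) ⊗ₜ[ℂ] (Coalgebra.comul (R := ℂ) a))
        = ∑ j ∈ t, ((((pp j ⊗ₜ[ℂ] qq j) ⊗ₜ[ℂ] (hh j ⊗ₜ[ℂ] rr j)) ⊗ₜ[ℂ] kk j)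
            ⊗ₜ[ℂ] (aa j ⊗ₜ[ℂ] bb j)) →
      ∑ i ∈ s, (p i * u i) ⊗ₜ[ℂ] (q i * v i)
        = ∑ j ∈ t, (pp j * tri (hh j) (aa j))
            ⊗ₜ[ℂ] (qq j * rr j * tri (kk j) (bb j))
  c6 : ∀ (x y : H) {ι κ : Type} (s : Finset ι) (t : Finset κ)
      (uu : ι → A) (hh : ι → H) (aa : ι → A)
      (g : κ → H) (c : κ → A) (u2 v2 : κ → H) (k : κ → H) (d : κ → A) (w : κ → H),
      (TensorProduct.map (TensorProduct.lift chi) (rho ∘ₗ (LinearMap.mul' ℂ H)))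
          ((TensorProduct.tensorTensorTensorComm ℂ H H H H)
            ((Coalgebra.comul (R := ℂ) x) ⊗ₜ[ℂ] (Coalgebra.comul (R := ℂ) y)))
        = ∑ i ∈ s, uu i ⊗ₜ[ℂ] (hh i ⊗ₜ[ℂ] aa i) →
      (TensorProduct.map
            (TensorProduct.map (TensorProduct.map rho (LinearMap.id : H →ₗ[ℂ] H))
              (LinearMap.id : H →ₗ[ℂ] H))
            (TensorProduct.map rho (LinearMap.id : H →ₗ[ℂ] H)))
          ((comul3 H x) ⊗ₜ[ℂ] (Coalgebra.comul (R := ℂ) y))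
        = ∑ j ∈ t, (((g j ⊗ₜ[ℂ] c j) ⊗ₜ[ℂ] u2 j) ⊗ₜ[ℂ] v2 j)
            ⊗ₜ[ℂ] ((k j ⊗ₜ[ℂ] d j) ⊗ₜ[ℂ] w j) →
      ∑ i ∈ s, hh i ⊗ₜ[ℂ] (uu i * aa i)
        = ∑ j ∈ t, (g j * k j) ⊗ₜ[ℂ] (c j * tri (u2 j) (d j) * chi (v2 j) (w j))
  c7 : ∀ (x : H) (a : A) {ι κ : Type} (s : Finset ι) (t : Finset κ)
      (x1 : ι → H) (h : ι → H) (b : ι → A)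
      (g : κ → H) (c : κ → A) (x2 : κ → H),
      (LinearMap.lTensor H rho) (Coalgebra.comul (R := ℂ) x)
        = ∑ i ∈ s, x1 i ⊗ₜ[ℂ] (h i ⊗ₜ[ℂ] b i) →
      (LinearMap.rTensor H rho) (Coalgebra.comul (R := ℂ) x)
        = ∑ j ∈ t, (g j ⊗ₜ[ℂ] c j) ⊗ₜ[ℂ] x2 j →
      ∑ i ∈ s, h i ⊗ₜ[ℂ] (tri (x1 i) a * b i)
        = ∑ j ∈ t, g j ⊗ₜ[ℂ] (c j * tri (x2 j) a)
  c8 : ∀ (x y : H) {ι κ : Type} (s : Finset ι) (t : Finset κ)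
      (p q u v : ι → A)
      (pp qq : κ → A) (h1 : κ → H) (a1 : κ → A) (x3 : κ → H) (h2 : κ → H) (a2 : κ → A)
      (x5 x6 : κ → H) (uu vv : κ → A) (kk : κ → H) (bb : κ → A) (y3 : κ → H),
      (TensorProduct.map
            ((Coalgebra.comul (R := ℂ) : A →ₗ[ℂ] A ⊗[ℂ] A) ∘ₗ (TensorProduct.lift chi))
            (psi ∘ₗ (LinearMap.mul' ℂ H)))
          ((TensorProduct.tensorTensorTensorComm ℂ H H H H)
            ((Coalgebra.comul (R := ℂ) x) ⊗ₜ[ℂ] (Coalgebra.comul (R := ℂ) y)))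
        = ∑ i ∈ s, (p i ⊗ₜ[ℂ] q i) ⊗ₜ[ℂ] (u i ⊗ₜ[ℂ] v i) →
      ((TensorProduct.map
            (TensorProduct.map
              (TensorProduct.map
                (TensorProduct.map (TensorProduct.map psi rho) (LinearMap.id : H →ₗ[ℂ] H))
                rho)
              (LinearMap.id : H →ₗ[ℂ] H))
            (LinearMap.id : H →ₗ[ℂ] H))
          (comul6 H x)) ⊗ₜ[ℂ]
        ((TensorProduct.map (TensorProduct.map psi rho) (LinearMap.id : H →ₗ[ℂ] H))
          (comul3 H y))
        = ∑ j ∈ t, ((((((pp j ⊗ₜ[ℂ] qq j) ⊗ₜ[ℂ] (h1 j ⊗ₜ[ℂ] a1 j)) ⊗ₜ[ℂ] x3 j)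
              ⊗ₜ[ℂ] (h2 j ⊗ₜ[ℂ] a2 j)) ⊗ₜ[ℂ] x5 j) ⊗ₜ[ℂ] x6 j)
            ⊗ₜ[ℂ] (((uu j ⊗ₜ[ℂ] vv j) ⊗ₜ[ℂ] (kk j ⊗ₜ[ℂ] bb j)) ⊗ₜ[ℂ] y3 j) →
      ∑ i ∈ s, (p i * u i) ⊗ₜ[ℂ] (q i * v i)
        = ∑ j ∈ t, (pp j * tri (h1 j) (uu j) * chi (h2 j) (kk j))
            ⊗ₜ[ℂ] (qq j * a1 j * tri (x3 j) (vv j) * a2 j * tri (x5 j) (bb j)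
                * chi (x6 j) (y3 j))

/-- `M`, identified with `A ⊗ H` via `e`, carries the Hopf algebra structure of the cocycle
bismash product `A^ψ #_χ H`. -/
structure IsCocycleBismash
    (tri : H →ₗ[ℂ] A →ₗ[ℂ] A) (rho : H →ₗ[ℂ] H ⊗[ℂ] A)
    (chi : H →ₗ[ℂ] H →ₗ[ℂ] A) (psi : H →ₗ[ℂ] A ⊗[ℂ] A)
    (M : Type) [Ring M] [HopfAlgebra ℂ M] (e : A ⊗[ℂ] H ≃ₗ[ℂ] M) : Prop where
  mul_def : ∀ (a b : A) (x y : H) {ι κ : Type} (s : Finset ι) (t : Finset κ)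
      (x1 x2 x3 : ι → H) (y1 y2 : κ → H),
      comul3 H x = ∑ i ∈ s, (x1 i ⊗ₜ[ℂ] x2 i) ⊗ₜ[ℂ] x3 i → Rep2 y t y1 y2 →
      e (a ⊗ₜ[ℂ] x) * e (b ⊗ₜ[ℂ] y)
        = ∑ i ∈ s, ∑ j ∈ t,
            e ((a * tri (x1 i) b * chi (x2 i) (y1 j)) ⊗ₜ[ℂ] (x3 i * y2 j))
  one_def : (1 : M) = e ((1 : A) ⊗ₜ[ℂ] (1 : H))
  comul_def : ∀ (a : A) (x : H) {ι κ : Type} (s : Finset ι) (t : Finset κ)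
      (a1 a2 : κ → A) (p q : ι → A) (g : ι → H) (c : ι → A) (u : ι → H),
      Rep2 a t a1 a2 →
      (TensorProduct.map (TensorProduct.map psi rho) (LinearMap.id : H →ₗ[ℂ] H))
          (comul3 H x)
        = ∑ i ∈ s, ((p i ⊗ₜ[ℂ] q i) ⊗ₜ[ℂ] (g i ⊗ₜ[ℂ] c i)) ⊗ₜ[ℂ] u i →
      Coalgebra.comul (R := ℂ) (e (a ⊗ₜ[ℂ] x))
        = ∑ j ∈ t, ∑ i ∈ s,
            e ((a1 j * p i) ⊗ₜ[ℂ] g i) ⊗ₜ[ℂ] e ((a2 j * q i * c i) ⊗ₜ[ℂ] u i)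
  counit_def : ∀ (a : A) (x : H),
      Coalgebra.counit (R := ℂ) (e (a ⊗ₜ[ℂ] x))
        = Coalgebra.counit (R := ℂ) a * Coalgebra.counit (R := ℂ) x

end CocycleLinkedPair

/-!
`Φ` is a right integral: in `∑ Φ(y₂) y₁` for `y = a # x` the factor `φ_H(x₃)` collapses
`x₁ ⊗ x₂` to `φ_H(x) 1 ⊗ 1` by right invariance of `φ_H`; since `ψ(1) = 1 ⊗ 1` and
`ρ(1) = 1 ⊗ 1`, what is left is `φ_H(x) ∑ φ_A(a₂) a₁ # 1 = φ_A(a) φ_H(x) 1 # 1`.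

Left invariance is then automatic on any Hopf algebra. Since `Δ ∘ S = (S ⊗ S) ∘ τ ∘ Δ`, the
composite `φ ∘ S` of a right integral `φ` is a left integral, and a normalised left integral `ℓ`
equals a normalised right integral `φ`, both being `∑ ℓ(x₁) φ(x₂)`. So `φ = φ ∘ S` is two-sided.
-/

open TensorProduct HopfAlgebra WithConv

namespace HopfAlgebra

variable {R C : Type*} [CommSemiring R] [Semiring C] [HopfAlgebra R C]

theorem comul_comp_antipode :
    comul ∘ₗ antipode R (A := C) =
      map (antipode R) (antipode R) ∘ₗ (TensorProduct.comm R C C).toLinearMap ∘ₗ comul := by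
  have hcounit : ∀ w : C ⊗[R] C,
      map (Algebra.linearMap R C ∘ₗ counit) (LinearMap.mul' R C ∘ₗ (antipode R).rTensor C ∘ₗ
          (TensorProduct.comm R C C).toLinearMap) (TensorProduct.assoc R C C C (map comul .id w))
        = 1 ⊗ₜ LinearMap.mul' R C ((antipode R).rTensor C (TensorProduct.comm R C C w)) := by
    intro w
    induction w using TensorProduct.induction_on with
    | zero => simp
    | add v w hv hw => simp only [map_add, hv, hw, tmul_add]
    | tmul x y =>
      rw [TensorProduct.map_tmul, LinearMap.id_apply, ← (ℛ R x).eq]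
      simp only [map_sum, sum_tmul]
      simp [Algebra.algebraMap_eq_smul_one]
      simp_rw [smul_tmul, ← mul_smul_comm, ← tmul_sum, ← Finset.mul_sum, sum_counit_smul]
  have hG : toConv (map (antipode R) (antipode R) ∘ₗ (TensorProduct.comm R C C).toLinearMap ∘ₗ
      comul) * toConv comul = (1 : WithConv (C →ₗ[R] C ⊗[R] C)) := by
    apply WithConv.ext
    simp only [LinearMap.convMul_def, LinearMap.convOne_def, ofConv_toConv]
    rw [LinearMap.mul'_tensor]
    simp only [coassoc_simps]
    rw [← LinearMap.rTensor_def, mul_antipode_rTensor_comul]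
    ext x
    simp [hcounit, Algebra.algebraMap_eq_smul_one, Algebra.TensorProduct.one_def]
  -- `Δ ∘ S` is a right convolution inverse of `Δ`, and `(S ⊗ S) ∘ τ ∘ Δ` a left one.
  exact congrArg ofConv (left_inv_eq_right_inv hG LinearMap.comul_right_inv).symm

end HopfAlgebra

section Integral

variable {R C : Type*} [CommSemiring R] [Semiring C] [Bialgebra R C]

-- `∑ φ(x₁) x₂ = φ(x) 1`, resp. `∑ φ(x₂) x₁ = φ(x) 1`, as identities in the convolution
-- algebra of `C →ₗ[R] C`.
def IsLeftIntegral (φ : C →ₗ[R] R) : Prop :=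
  toConv (Algebra.linearMap R C ∘ₗ φ) * toConv LinearMap.id = toConv (Algebra.linearMap R C ∘ₗ φ)

def IsRightIntegral (φ : C →ₗ[R] R) : Prop :=
  toConv LinearMap.id * toConv (Algebra.linearMap R C ∘ₗ φ) = toConv (Algebra.linearMap R C ∘ₗ φ)

variable {φ ψ : C →ₗ[R] R}

theorem isLeftIntegral_iff :
    IsLeftIntegral φ ↔ ∀ x, TensorProduct.lid R C (φ.rTensor C (comul x)) = φ x • 1 := by
  have h : ∀ w : C ⊗[R] C, LinearMap.mul' R C (map (Algebra.linearMap R C ∘ₗ φ) .id w)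
      = TensorProduct.lid R C (φ.rTensor C w) := by
    intro w
    induction w using TensorProduct.induction_on with
    | zero => simp
    | add v w hv hw => simp only [map_add, hv, hw]
    | tmul x y => simp [Algebra.smul_def]
  simp [IsLeftIntegral, WithConv.ext_iff, LinearMap.ext_iff, h, Algebra.smul_def]

theorem isRightIntegral_iff :
    IsRightIntegral φ ↔ ∀ x, TensorProduct.rid R C (φ.lTensor C (comul x)) = φ x • 1 := by
  have h : ∀ w : C ⊗[R] C, LinearMap.mul' R C (map .id (Algebra.linearMap R C ∘ₗ φ) w)
      = TensorProduct.rid R C (φ.lTensor C w) := by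
    intro w
    induction w using TensorProduct.induction_on with
    | zero => simp
    | add v w hv hw => simp only [map_add, hv, hw]
    | tmul x y => simp [Algebra.smul_def, Algebra.commutes]
  simp [IsRightIntegral, WithConv.ext_iff, LinearMap.ext_iff, h, Algebra.smul_def]

theorem IsLeftIntegral.eq_of_isRightIntegral (hφ : IsLeftIntegral φ) (hψ : IsRightIntegral ψ)
    (hφ1 : φ 1 = 1) (hψ1 : ψ 1 = 1) : φ = ψ := by
  have h : ∀ w : C ⊗[R] C, ψ (TensorProduct.lid R C (φ.rTensor C w))
      = φ (TensorProduct.rid R C (ψ.lTensor C w)) := by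
    intro w
    induction w using TensorProduct.induction_on with
    | zero => simp
    | add v w hv hw => simp only [map_add, hv, hw]
    | tmul x y => simp [mul_comm]
  ext x
  simpa [isLeftIntegral_iff.1 hφ, isRightIntegral_iff.1 hψ, hφ1, hψ1] using h (comul x)

end Integral

section HopfIntegral

variable {R C : Type*} [CommSemiring R] [Semiring C] [HopfAlgebra R C] {φ : C →ₗ[R] R}

theorem IsRightIntegral.isLeftIntegral_comp_antipode (hφ : IsRightIntegral φ) :
    IsLeftIntegral (φ ∘ₗ antipode R) := by
  set ηφS := Algebra.linearMap R C ∘ₗ φ ∘ₗ antipode R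
  -- `∑ φ(S x₁) S x₂ = φ(S x) 1`: right invariance at `S x`, read through `comul_comp_antipode`
  have h : toConv ηφS * toConv (antipode R) = toConv ηφS := by
    have hS := congrArg (fun f => ofConv f ∘ₗ antipode R) hφ
    simp only [LinearMap.convMul_def, ofConv_toConv, LinearMap.comp_assoc, comul_comp_antipode]
      at hS
    have hswap : LinearMap.mul' R C ∘ₗ map .id (Algebra.linearMap R C ∘ₗ φ) ∘ₗ
        map (antipode R) (antipode R) ∘ₗ (TensorProduct.comm R C C).toLinearMap =
        LinearMap.mul' R C ∘ₗ map ηφS (antipode R) := by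
      ext a b
      simp [ηφS, Algebra.commutes]
    apply WithConv.ext
    simp only [LinearMap.convMul_def, ofConv_toConv]
    rw [← LinearMap.comp_assoc, ← hswap]
    simpa only [LinearMap.comp_assoc] using hS
  calc toConv ηφS * toConv LinearMap.id
      = toConv ηφS * toConv (antipode R) * toConv LinearMap.id := by rw [h]
    _ = toConv ηφS := by rw [mul_assoc, LinearMap.antipode_mul_id, mul_one]

theorem IsRightIntegral.isLeftIntegral (hφ : IsRightIntegral φ) (hφ1 : φ 1 = 1) :
    IsLeftIntegral φ := by
  have hS := hφ.isLeftIntegral_comp_antipode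
  rwa [hS.eq_of_isRightIntegral hφ (by simp [hφ1]) hφ1] at hS

end HopfIntegral

theorem isNormalIntegral_iff {H : Type} [Ring H] [HopfAlgebra ℂ H] (φ : H →ₗ[ℂ] ℂ) :
    IsNormalIntegral H φ ↔ φ 1 = 1 ∧ IsLeftIntegral φ ∧ IsRightIntegral φ := by
  have hsum : ∀ (x : H) {ι : Type} (s : Finset ι) (x1 x2 : ι → H), Rep2 x s x1 x2 →
      ∑ i ∈ s, φ (x1 i) • x2 i = TensorProduct.lid ℂ H (φ.rTensor H (comul x)) ∧
      ∑ i ∈ s, φ (x2 i) • x1 i = TensorProduct.rid ℂ H (φ.lTensor H (comul x)) := by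
    intro x ι s x1 x2 h
    rw [Rep2] at h
    simp [h, map_sum]
  rw [isLeftIntegral_iff, isRightIntegral_iff]
  constructor
  · rintro ⟨h1, hl, hr⟩
    refine ⟨h1, fun x => ?_, fun x => ?_⟩
    · rw [← (hsum x _ _ _ (ℛ ℂ x).eq.symm).1, hl x _ _ _ (ℛ ℂ x).eq.symm]
    · rw [← (hsum x _ _ _ (ℛ ℂ x).eq.symm).2, hr x _ _ _ (ℛ ℂ x).eq.symm]
  · rintro ⟨h1, hl, hr⟩
    exact ⟨h1, fun x ι s x1 x2 h => (hsum x s x1 x2 h).1.trans (hl x),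
      fun x ι s x1 x2 h => (hsum x s x1 x2 h).2.trans (hr x)⟩

namespace TensorProduct

theorem exists_multiset_sum_map_tmul {R M N α β : Type*} [CommSemiring R]
    [AddCommMonoid M] [Module R M] [AddCommMonoid N] [Module R N] {f : α → M} {g : β → N}
    (hf : ∀ m, ∃ s : Multiset α, m = (s.map f).sum)
    (hg : ∀ n, ∃ t : Multiset β, n = (t.map g).sum) (w : M ⊗[R] N) :
    ∃ u : Multiset (α × β), w = (u.map fun p => f p.1 ⊗ₜ[R] g p.2).sum := by
  induction w using TensorProduct.induction_on with
  | zero => exact ⟨0, by simp⟩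
  | add v w hv hw =>
    obtain ⟨u, rfl⟩ := hv
    obtain ⟨u', rfl⟩ := hw
    exact ⟨u + u', by simp⟩
  | tmul m n =>
    obtain ⟨s, rfl⟩ := hf m
    obtain ⟨t, rfl⟩ := hg n
    refine ⟨s ×ˢ t, ?_⟩
    induction s using Multiset.induction_on with
    | empty => simp
    | cons a s ih =>
      have hmk := map_multiset_sum (TensorProduct.mk R M N (f a)) (t.map g)
      simp only [Multiset.map_map, Function.comp_def, mk_apply] at hmk
      simp [Multiset.cons_product, ← ih, add_tmul, Multiset.map_map, hmk]

theorem exists_multiset_sum_map_tmul_tmul {R M₁ M₂ M₃ M₄ M₅ : Type*}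
    [CommSemiring R] [AddCommMonoid M₁] [Module R M₁] [AddCommMonoid M₂] [Module R M₂]
    [AddCommMonoid M₃] [Module R M₃] [AddCommMonoid M₄] [Module R M₄]
    [AddCommMonoid M₅] [Module R M₅] (w : ((M₁ ⊗[R] M₂) ⊗[R] (M₃ ⊗[R] M₄)) ⊗[R] M₅) :
    ∃ u : Multiset (((M₁ × M₂) × (M₃ × M₄)) × M₅),
      w = (u.map fun t => ((t.1.1.1 ⊗ₜ t.1.1.2) ⊗ₜ (t.1.2.1 ⊗ₜ t.1.2.2)) ⊗ₜ t.2).sum := by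
  have h₁₂₃₄ : ∀ x : (M₁ ⊗[R] M₂) ⊗[R] (M₃ ⊗[R] M₄), ∃ u : Multiset ((M₁ × M₂) × (M₃ × M₄)),
      x = (u.map fun t => (t.1.1 ⊗ₜ t.1.2) ⊗ₜ (t.2.1 ⊗ₜ t.2.2)).sum :=
    exists_multiset_sum_map_tmul (f := fun p : M₁ × M₂ => p.1 ⊗ₜ[R] p.2)
      (g := fun p : M₃ × M₄ => p.1 ⊗ₜ[R] p.2) exists_multiset exists_multiset
  exact exists_multiset_sum_map_tmul h₁₂₃₄ (g := id) (fun m => ⟨{m}, by simp⟩) w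

theorem rid_lTensor_rTensor {R M N P : Type*} [CommSemiring R]
    [AddCommMonoid M] [Module R M] [AddCommMonoid N] [Module R N] [AddCommMonoid P] [Module R P]
    (φ : P →ₗ[R] R) (f : M →ₗ[R] N) (w : M ⊗[R] P) :
    TensorProduct.rid R N (φ.lTensor N (f.rTensor P w)) =
      f (TensorProduct.rid R M (φ.lTensor M w)) := by
  induction w using TensorProduct.induction_on with
  | zero => simp
  | add v w hv hw => simp only [map_add, hv, hw]
  | tmul m p => simp

end TensorProduct

theorem IsRightIntegral.rid_lTensor_rTensor_comul3 {H P : Type} [Ring H] [HopfAlgebra ℂ H]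
    [AddCommGroup P] [Module ℂ P] {φ : H →ₗ[ℂ] ℂ} (hφ : IsRightIntegral φ)
    (f : H ⊗[ℂ] H →ₗ[ℂ] P) (x : H) :
    TensorProduct.rid ℂ P (φ.lTensor P (f.rTensor H (comul3 H x))) = φ x • f (1 ⊗ₜ 1) := by
  rw [comul3, LinearMap.comp_apply, rid_lTensor_rTensor, rid_lTensor_rTensor,
    isRightIntegral_iff.1 hφ]
  simp [Algebra.TensorProduct.one_def]

section CocycleBismash

variable {A H M : Type} [Ring A] [HopfAlgebra ℂ A] [Ring H] [HopfAlgebra ℂ H]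
  [Ring M] [HopfAlgebra ℂ M]

/-- Its value at `ψ(x₁) ⊗ ρ(x₂)`, weighted by `φ_H(x₃)`, is the part of `∑ Φ(y₂) y₁`,
`y = a # x`, coming from the Sweedler term `b₁ ⊗ b₂` of `Δa`. -/
def bismashIntegralFold (e : A ⊗[ℂ] H ≃ₗ[ℂ] M) (φ : A →ₗ[ℂ] ℂ) (b₁ b₂ : A) :
    (A ⊗[ℂ] A) ⊗[ℂ] (H ⊗[ℂ] A) →ₗ[ℂ] M :=
  (TensorProduct.rid ℂ M).toLinearMap ∘ₗ map (e : A ⊗[ℂ] H →ₗ[ℂ] M) (φ ∘ₗ LinearMap.mul' ℂ A) ∘ₗ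
    (tensorTensorTensorComm ℂ A A H A).toLinearMap ∘ₗ
    map (map (LinearMap.mulLeft ℂ b₁) (LinearMap.mulLeft ℂ b₂)) LinearMap.id

theorem bismashIntegralFold_tmul (e : A ⊗[ℂ] H ≃ₗ[ℂ] M) (φ : A →ₗ[ℂ] ℂ) (b₁ b₂ p q c : A)
    (g : H) :
    bismashIntegralFold e φ b₁ b₂ ((p ⊗ₜ q) ⊗ₜ (g ⊗ₜ c)) = φ (b₂ * q * c) • e ((b₁ * p) ⊗ₜ g) := by
  simp [bismashIntegralFold, mul_assoc]

variable {tri : H →ₗ[ℂ] A →ₗ[ℂ] A} {rho : H →ₗ[ℂ] H ⊗[ℂ] A}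
  {chi : H →ₗ[ℂ] H →ₗ[ℂ] A} {psi : H →ₗ[ℂ] A ⊗[ℂ] A} {e : A ⊗[ℂ] H ≃ₗ[ℂ] M}
  {φA : A →ₗ[ℂ] ℂ} {φH : H →ₗ[ℂ] ℂ} {Φ : M →ₗ[ℂ] ℂ}

theorem IsCocycleBismash.rid_lTensor_comul_tmul
    (hM : IsCocycleBismash A H tri rho chi psi M e) (hrho : rho 1 = 1 ⊗ₜ 1)
    (hpsi : psi 1 = 1 ⊗ₜ 1) (hφA : IsRightIntegral φA) (hφH : IsRightIntegral φH)
    (hΦ : ∀ a x, Φ (e (a ⊗ₜ x)) = φA a * φH x) (a : A) (x : H) :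
    TensorProduct.rid ℂ M (Φ.lTensor M (comul (e (a ⊗ₜ x)))) = Φ (e (a ⊗ₜ x)) • 1 := by
  classical
  obtain ⟨u, hu⟩ := exists_multiset_sum_map_tmul_tmul ((map psi rho).rTensor H (comul3 H x))
  have hT : (map psi rho).rTensor H (comul3 H x) = ∑ t ∈ u.toEnumFinset,
      ((t.1.1.1.1 ⊗ₜ t.1.1.1.2) ⊗ₜ (t.1.1.2.1 ⊗ₜ t.1.1.2.2)) ⊗ₜ t.1.2 := by
    rw [hu, Finset.sum_eq_multiset_sum]
    nth_rw 1 [← u.map_toEnumFinset_fst]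
    rw [Multiset.map_map]
    rfl
  set ra := ℛ ℂ a
  have hcomul := hM.comul_def a x u.toEnumFinset ra.index ra.left ra.right (fun t => t.1.1.1.1)
    (fun t => t.1.1.1.2) (fun t => t.1.1.2.1) (fun t => t.1.1.2.2) (fun t => t.1.2) ra.eq.symm hT
  calc TensorProduct.rid ℂ M (Φ.lTensor M (comul (e (a ⊗ₜ x))))
      = ∑ j ∈ ra.index, ∑ t ∈ u.toEnumFinset,
          Φ (e ((ra.right j * t.1.1.1.2 * t.1.1.2.2) ⊗ₜ t.1.2)) •
            e ((ra.left j * t.1.1.1.1) ⊗ₜ t.1.1.2.1) := by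
        simp [hcomul, map_sum]
    _ = ∑ j ∈ ra.index, bismashIntegralFold e φA (ra.left j) (ra.right j)
          (TensorProduct.rid ℂ _ (φH.lTensor _ ((map psi rho).rTensor H (comul3 H x)))) := by
        simp [hT, map_sum, hΦ, bismashIntegralFold_tmul, smul_smul, mul_comm]
    _ = ∑ j ∈ ra.index, φH x • φA (ra.right j) • e (ra.left j ⊗ₜ 1) := by
        simp only [hφH.rid_lTensor_rTensor_comul3, TensorProduct.map_tmul, hrho, hpsi, map_smul,
          bismashIntegralFold_tmul, mul_one]
    _ = φH x • e (TensorProduct.rid ℂ A (φA.lTensor A (comul a)) ⊗ₜ 1) := by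
        simp only [← ra.eq, map_sum, LinearMap.lTensor_tmul, TensorProduct.rid_tmul, sum_tmul,
          Finset.smul_sum, ← TensorProduct.smul_tmul', map_smul]
    _ = Φ (e (a ⊗ₜ x)) • 1 := by
        rw [isRightIntegral_iff.1 hφA, hΦ, hM.one_def, ← TensorProduct.smul_tmul', map_smul,
          smul_smul, mul_comm]

theorem IsCocycleBismash.isRightIntegral
    (hM : IsCocycleBismash A H tri rho chi psi M e) (hrho : rho 1 = 1 ⊗ₜ 1)
    (hpsi : psi 1 = 1 ⊗ₜ 1) (hφA : IsRightIntegral φA) (hφH : IsRightIntegral φH)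
    (hΦ : ∀ a x, Φ (e (a ⊗ₜ x)) = φA a * φH x) : IsRightIntegral Φ := by
  rw [isRightIntegral_iff]
  intro m
  obtain ⟨w, rfl⟩ := e.surjective m
  induction w using TensorProduct.induction_on with
  | zero => simp
  | add v w hv hw => simp only [map_add, hv, hw, add_smul]
  | tmul a x => exact hM.rid_lTensor_comul_tmul hrho hpsi hφA hφH hΦ a x

end CocycleBismash

/-- Let `(A, H, ▶, ρ, χ, ψ)` be a cocycle linked pair of cosemisimple
bialgebras with normal integrals `φ_A` and `φ_H`.  Then the functional
`Φ(a # x) = φ_A(a) φ_H(x)` on the cocycle bismash product `A^ψ #_χ H` is a normal integral,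
hence `A^ψ #_χ H` is cosemisimple. -/
theorem cocycle_bismash_normal_integral
    {A H : Type} [Ring A] [HopfAlgebra ℂ A] [Ring H] [HopfAlgebra ℂ H]
    (tri : H →ₗ[ℂ] A →ₗ[ℂ] A) (rho : H →ₗ[ℂ] H ⊗[ℂ] A)
    (chi : H →ₗ[ℂ] H →ₗ[ℂ] A) (psi : H →ₗ[ℂ] A ⊗[ℂ] A)
    (hclp : IsCocycleLinkedPair A H tri rho chi psi)
    (φA : A →ₗ[ℂ] ℂ) (hφA : IsNormalIntegral A φA)
    (φH : H →ₗ[ℂ] ℂ) (hφH : IsNormalIntegral H φH)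
    (M : Type) [Ring M] [HopfAlgebra ℂ M] (e : A ⊗[ℂ] H ≃ₗ[ℂ] M)
    (hM : IsCocycleBismash A H tri rho chi psi M e) :
    IsNormalIntegral M
      ((LinearMap.mul' ℂ ℂ) ∘ₗ (TensorProduct.map φA φH) ∘ₗ (e.symm : M →ₗ[ℂ] A ⊗[ℂ] H)) := by
  set Φ := (LinearMap.mul' ℂ ℂ) ∘ₗ (TensorProduct.map φA φH) ∘ₗ (e.symm : M →ₗ[ℂ] A ⊗[ℂ] H)
  have hΦ : ∀ a x, Φ (e (a ⊗ₜ x)) = φA a * φH x := fun a x => by simp [Φ]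
  have hΦ1 : Φ 1 = 1 := by rw [hM.one_def, hΦ, hφA.1, hφH.1, one_mul]
  obtain ⟨-, -, hφA⟩ := (isNormalIntegral_iff φA).1 hφA
  obtain ⟨-, -, hφH⟩ := (isNormalIntegral_iff φH).1 hφH
  have hΦr := hM.isRightIntegral hclp.c2 hclp.c4 hφA hφH hΦ
  exact (isNormalIntegral_iff Φ).2 ⟨hΦ1, hΦr.isLeftIntegral hΦ1, hΦr⟩
end
end
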